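/- arXiv:1903.00188 — 6 statements merged into one kernel-verified Lean document; each statement's English description precedes it below -/
import Mathlib

section
/- Let Σ = {0,1,2,3}. If an n-ary quasigroup f : Σ^n → Σ satisfies the {a,b}-semilinearity identity after replacing any two of the defining pairs {aⱼ,bⱼ} by their complements in Σ, the identity remains true: that is, if f({a₁,b₁}×⋯×{aₙ,bₙ}) = {a₀,b₀} and i ≠ j are two indices in {0,…,n}, then the same identity holds with {aᵢ,bᵢ} and {aⱼ,bⱼ} replaced by Σ∖{aᵢ,bᵢ} and Σ∖{aⱼ,bⱼ} respectively. -/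
def IsNQuasigroup {α : Type} {n : ℕ} (f : (Fin n → α) → α) : Prop :=
  ∀ (i : Fin n) (x : Fin n → α), Function.Bijective (fun a => f (Function.update x i a))

/-!
Call a set of symbols a half if it has exactly half of the symbols; the two-element subsets of
`Σ = {0,1,2,3}` are the halves. Each one-variable slice of a quasigroup is a bijection, and a
bijection sending a half into a half sends it onto that half, hence sends its complement onto
the complementary half. By induction on the number of coordinates of `x` lying outside their
halves, this gives a parity law: `f x` lies in `A₀` iff an even number of the `xₖ` lie outside
`Aₖ`. Complementing an even number of the halves, among `A₀, …, Aₙ`, leaves this law intact,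
and surjectivity of a slice gives the reverse inclusion of the identity.
-/

open Function

section Half

variable {α : Type*}

def IsHalf (s : Set α) : Prop := 2 * s.ncard = Nat.card α

theorem IsHalf.compl [Finite α] {s : Set α} (hs : IsHalf s) : IsHalf sᶜ := by
  have := Set.ncard_add_ncard_compl s
  unfold IsHalf at *
  omega

theorem IsHalf.ncard_eq {s t : Set α} (hs : IsHalf s) (ht : IsHalf t) : s.ncard = t.ncard := by
  unfold IsHalf at *
  omega

theorem IsHalf.nonempty [Finite α] [Nonempty α] {s : Set α} (hs : IsHalf s) : s.Nonempty := by
  have := Nat.card_pos (α := α)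
  unfold IsHalf at hs
  exact Set.nonempty_of_ncard_ne_zero (by omega)

theorem Set.MapsTo.image_eq_of_ncard_eq {β : Type*} [Finite β] {g : α → β} (hg : Injective g)
    {P : Set α} {Q : Set β} (h : Set.MapsTo g P Q) (hPQ : P.ncard = Q.ncard) : g '' P = Q :=
  Set.eq_of_subset_of_ncard_le h.image_subset (by rw [Set.ncard_image_of_injective _ hg, hPQ])

theorem Function.Injective.apply_mem_iff_of_isHalf [Finite α] {g : α → α} (hg : Injective g)
    {P Q : Set α} (hP : IsHalf P) (hQ : IsHalf Q) {p : Prop} (h : ∀ a ∈ P, g a ∈ Q ↔ p)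
    (a : α) : g a ∈ Q ↔ (a ∈ P ↔ p) := by
  by_cases hp : p
  · have hPQ := Set.MapsTo.image_eq_of_ncard_eq hg (fun b hb => (h b hb).2 hp)
      (hP.ncard_eq hQ)
    rw [← hPQ, hg.mem_set_image]
    tauto
  · have hPQ := Set.MapsTo.image_eq_of_ncard_eq hg (Q := Qᶜ) (fun b hb => (h b hb).not.2 hp)
      (hP.ncard_eq hQ.compl)
    rw [← Set.notMem_compl_iff, ← hPQ, hg.mem_set_image]
    tauto

end Half

section Quasigroup

variable {α : Type} {n : ℕ} {f : (Fin n → α) → α} {B : Fin n → Set α} {C : Set α}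

open Classical in
noncomputable def nonmemIndices (B : Fin n → Set α) (x : Fin n → α) : Finset (Fin n) :=
  {k | x k ∉ B k}

theorem mem_nonmemIndices {x : Fin n → α} {k : Fin n} :
    k ∈ nonmemIndices B x ↔ x k ∉ B k := by
  simp [nonmemIndices]

theorem nonmemIndices_eq_empty_iff {x : Fin n → α} :
    nonmemIndices B x = ∅ ↔ ∀ k, x k ∈ B k := by
  simp [Finset.eq_empty_iff_forall_notMem, mem_nonmemIndices]

theorem nonmemIndices_update_of_mem (x : Fin n → α) {m : Fin n} {a : α} (ha : a ∈ B m) :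
    nonmemIndices B (update x m a) = (nonmemIndices B x).erase m := by
  ext k
  by_cases hk : k = m
  · subst hk
    simp [mem_nonmemIndices, ha]
  · simp [mem_nonmemIndices, hk]

theorem IsNQuasigroup.mem_iff_even_card_nonmemIndices [Finite α] (hf : IsNQuasigroup f)
    (hB : ∀ k, IsHalf (B k)) (hC : IsHalf C) (hsem : Set.MapsTo f {x | ∀ k, x k ∈ B k} C)
    (x : Fin n → α) : f x ∈ C ↔ Even (nonmemIndices B x).card := by
  induction h : (nonmemIndices B x).card generalizing x with
  | zero => simpa using hsem (nonmemIndices_eq_empty_iff.1 (Finset.card_eq_zero.1 h))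
  | succ N ih =>
    obtain ⟨m, hm⟩ : (nonmemIndices B x).Nonempty := Finset.card_pos.1 (by omega)
    have hslice : ∀ a ∈ B m, f (update x m a) ∈ C ↔ Even N := fun a ha =>
      ih _ (by rw [nonmemIndices_update_of_mem x ha, Finset.card_erase_of_mem hm, h]; rfl)
    have hx := (hf m x).injective.apply_mem_iff_of_isHalf (hB m) hC hslice (x m)
    simp only [update_eq_self] at hx
    have hxm := mem_nonmemIndices.1 hm
    rw [hx, Nat.even_add_one]
    tauto

theorem IsNQuasigroup.image_pi_ite_compl [Finite α] (hf : IsNQuasigroup f)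
    (hB : ∀ k, IsHalf (B k)) (hC : IsHalf C) (hsem : f '' {x | ∀ k, x k ∈ B k} = C)
    (S : Finset (Fin n)) :
    f '' {x | ∀ k, x k ∈ if k ∈ S then (B k)ᶜ else B k} = if Even S.card then C else Cᶜ := by
  set T : Fin n → Set α := fun k => if k ∈ S then (B k)ᶜ else B k with hT_def
  set T₀ := if Even S.card then C else Cᶜ with hT₀_def
  have hT : ∀ k, IsHalf (T k) := fun k => by
    simp only [hT_def]
    split_ifs
    exacts [(hB k).compl, hB k]
  have hT₀ : IsHalf T₀ := by
    simp only [hT₀_def]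
    split_ifs
    exacts [hC, hC.compl]
  have hmaps : Set.MapsTo f {x | ∀ k, x k ∈ T k} T₀ := by
    intro x hx
    have hS : nonmemIndices B x = S := by
      ext k
      have := hx k
      simp only [hT_def] at this
      split_ifs at this with hk <;> simpa [mem_nonmemIndices, hk] using this
    have hfx := hf.mem_iff_even_card_nonmemIndices hB hC (hsem ▸ Set.mapsTo_image f _) x
    rw [hS] at hfx
    simp only [hT₀_def]
    split_ifs with hS_even <;> simpa [hfx] using hS_even
  refine hmaps.image_subset.antisymm fun y hy => ?_
  -- any coordinate `m` will do; `S` only serves to show that there is one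
  obtain rfl | ⟨m, -⟩ := S.eq_empty_or_nonempty
  · simpa [hT_def, hT₀_def, ← hsem] using hy
  have : Nonempty α := ⟨y⟩
  choose x₀ hx₀ using fun k => (hT k).nonempty
  have hupdate : ∀ a ∈ T m, ∀ k, update x₀ m a k ∈ T k := fun a ha k => by
    by_cases hk : k = m
    · subst hk
      simpa using ha
    · simpa [hk] using hx₀ k
  have hslice : Set.MapsTo (fun a => f (update x₀ m a)) (T m) T₀ := fun a ha =>
    hmaps (hupdate a ha)
  rw [← hslice.image_eq_of_ncard_eq (hf m x₀).injective ((hT m).ncard_eq hT₀)] at hy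
  obtain ⟨a, ha, rfl⟩ := hy
  exact ⟨update x₀ m a, hupdate a ha, rfl⟩

end Quasigroup

theorem Fin.even_card_filter_succ_mem_iff {n : ℕ} {D : Finset (Fin (n + 1))} (hD : Even D.card) :
    Even ({k : Fin n | k.succ ∈ D} : Finset _).card ↔ (0 : Fin (n + 1)) ∉ D := by
  have hcard := Fin.card_filter_univ_succ' (· ∈ D)
  rw [Finset.filter_mem_eq_inter, Finset.univ_inter] at hcard
  rw [hcard] at hD
  by_cases h₀ : (0 : Fin (n + 1)) ∈ D
  · simp only [h₀, if_true, not_true, iff_false] at hD ⊢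
    rwa [add_comm, Nat.even_add_one] at hD
  · simpa only [h₀, if_false, not_false_iff, iff_true, zero_add] using hD

/-- If the semilinearity identity `f(A₁×⋯×Aₙ) = A₀` holds for two-element sets `A j`
and `i ≠ j` are two indices in `{0,…,n}`, then it also holds after replacing the
pairs at positions `i` and `j` by their complements in `Σ = {0,1,2,3}`. -/
theorem semilinear_complement_pairs {n : ℕ} (f : (Fin n → Fin 4) → Fin 4)
    (hf : IsNQuasigroup f) (A : Fin (n + 1) → Set (Fin 4))
    (hA : ∀ k, ∃ c d : Fin 4, c ≠ d ∧ A k = {c, d})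
    (hsem : f '' {x | ∀ k : Fin n, x k ∈ A k.succ} = A 0)
    (i j : Fin (n + 1)) (hij : i ≠ j) :
    f '' {x | ∀ k : Fin n,
        x k ∈ (if k.succ = i ∨ k.succ = j then (A k.succ)ᶜ else A k.succ)} =
      (if (0 : Fin (n + 1)) = i ∨ (0 : Fin (n + 1)) = j then (A 0)ᶜ else A 0) := by
  have hhalf : ∀ k, IsHalf (A k) := fun k => by
    obtain ⟨c, d, hcd, hk⟩ := hA k
    rw [IsHalf, hk, Set.ncard_pair hcd, Nat.card_eq_fintype_card, Fintype.card_fin]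
  have hpar := Fin.even_card_filter_succ_mem_iff (D := {i, j})
    (by rw [Finset.card_pair hij]; exact even_two)
  have key := hf.image_pi_ite_compl (fun k => hhalf k.succ) (hhalf 0) hsem
    {k | k.succ ∈ ({i, j} : Finset _)}
  simp only [hpar, ite_not] at key
  simpa using key
end

section
/- Let Σ = {0,1,2,3} and let f : Σ^n → Σ be an n-ary quasigroup that is {0,a}-semilinear (in every argument) for some a ∈ {1,2,3}, with native involution ξ = (0a)(bc) where {b,c} = Σ∖{0,a}. Then for any two distinct indices i, j ∈ {0,1,…,n}, the isotopy consisting of ξ in positions i and j and the identity permutation elsewhere is an autotopy of f. -/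
def IsAutotopy {α : Type} {n : ℕ} (f : (Fin n → α) → α)
    (θ : Fin (n + 1) → Equiv.Perm α) : Prop :=
  ∀ x : Fin n → α, f (fun i => θ i.succ (x i)) = θ 0 (f x)

/-- The pair `{0,a}` or its complement in `Σ = {0,1,2,3}`, selected by a Boolean. -/
def pairSet (a : Fin 4) (ε : Bool) : Set (Fin 4) :=
  if ε then {0, a} else ({0, a} : Set (Fin 4))ᶜ

/-- `f` is `{0,a}`-semilinear (in every argument): whenever each argument ranges over
`{0,a}` or its complement, the value ranges over `{0,a}` or its complement. -/
def ZeroSemilinear {n : ℕ} (f : (Fin n → Fin 4) → Fin 4) (a : Fin 4) : Prop :=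
  ∀ ε : Fin n → Bool, ∃ ε₀ : Bool,
    f '' {x | ∀ j : Fin n, x j ∈ pairSet a (ε j)} = pairSet a ε₀

/-! Flipping one argument `xₖ` by `ξ` keeps every argument in its class (`{0,a}` or its
complement), so by semilinearity the value stays in a fixed two-element class. As `f` is a
quasigroup and `ξ` has no fixed points, the value changes, so it becomes the other element of that
class; `ξ` preserves the class without fixing anything, so that element is `ξ (f x)`. Hence
flipping a set of arguments applies `ξ` once per flip to the value, and since `ξ` is an involution,
an even number of flips among the positions `0,…,n` cancels out. -/

open Function Finset

lemma mem_pairSet_iff {a x : Fin 4} {ε : Bool} : x ∈ pairSet a ε ↔ (x = 0 ∨ x = a ↔ ε) := by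
  cases ε <;> simp [pairSet]

lemma eq_of_mem_pairSet {a : Fin 4} (ha : a ≠ 0) {ε : Bool} {u v w : Fin 4}
    (hu : u ∈ pairSet a ε) (hv : v ∈ pairSet a ε) (hw : w ∈ pairSet a ε)
    (hvu : v ≠ u) (hwu : w ≠ u) : v = w := by
  rw [mem_pairSet_iff] at hu hv hw
  revert a ε u v w
  decide

lemma apply_mem_pairSet {a : Fin 4} {ξ : Fin 4 → Fin 4} (hinv : Involutive ξ) (h0 : ξ 0 = a)
    {ε : Bool} {x : Fin 4} (hx : x ∈ pairSet a ε) : ξ x ∈ pairSet a ε := by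
  have ha : ξ a = 0 := h0 ▸ hinv 0
  have hclass : ξ x = 0 ∨ ξ x = a ↔ x = 0 ∨ x = a := by
    rw [← hinv.injective.eq_iff, ← hinv.injective.eq_iff (b := a), hinv x, ha, h0, or_comm]
  rw [mem_pairSet_iff] at hx ⊢
  exact hclass.trans hx

namespace ZeroSemilinear

variable {n : ℕ} {f : (Fin n → Fin 4) → Fin 4} {a : Fin 4} {ξ : Equiv.Perm (Fin 4)}

theorem apply_update (hsem : ZeroSemilinear f a) (hf : IsNQuasigroup f) (ha : a ≠ 0)
    (hinv : Involutive ξ) (hfix : ∀ x, ξ x ≠ x) (h0 : ξ 0 = a) (x : Fin n → Fin 4) (k : Fin n) :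
    f (update x k (ξ (x k))) = ξ (f x) := by
  obtain ⟨ε₀, hε₀⟩ := hsem fun j => decide (x j = 0 ∨ x j = a)
  have hx : ∀ j, x j ∈ pairSet a (decide (x j = 0 ∨ x j = a)) := fun j => by
    simp [mem_pairSet_iff]
  have hy : ∀ j, update x k (ξ (x k)) j ∈ pairSet a (decide (x j = 0 ∨ x j = a)) := fun j => by
    rcases eq_or_ne j k with rfl | hjk
    · simpa using apply_mem_pairSet hinv h0 (hx j)
    · simpa [update_of_ne hjk] using hx j
  have hfx : f x ∈ pairSet a ε₀ := hε₀ ▸ ⟨x, hx, rfl⟩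
  have hfy : f (update x k (ξ (x k))) ∈ pairSet a ε₀ := hε₀ ▸ ⟨_, hy, rfl⟩
  have hne : f (update x k (ξ (x k))) ≠ f x := fun h =>
    hfix (x k) ((hf k x).1 (by simpa only [update_eq_self] using h))
  exact eq_of_mem_pairSet ha hfx hfy (apply_mem_pairSet hinv h0 hfx) hne (hfix _)

theorem apply_ite_mem (hsem : ZeroSemilinear f a) (hf : IsNQuasigroup f) (ha : a ≠ 0)
    (hinv : Involutive ξ) (hfix : ∀ x, ξ x ≠ x) (h0 : ξ 0 = a) (x : Fin n → Fin 4)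
    (s : Finset (Fin n)) : f (fun k => if k ∈ s then ξ (x k) else x k) = ξ^[#s] (f x) := by
  induction s using Finset.induction_on with
  | empty => simp
  | insert k s hks ih =>
    have hupd : (fun j => if j ∈ insert k s then ξ (x j) else x j)
        = update (fun j => if j ∈ s then ξ (x j) else x j) k (ξ (x k)) := by
      ext j
      rcases eq_or_ne j k with rfl | hjk
      · simp
      · simp [hjk]
    have hxk : (if k ∈ s then ξ (x k) else x k) = x k := if_neg hks
    rw [hupd, ← hxk, apply_update hsem hf ha hinv hfix h0, ih, card_insert_of_notMem hks,
      iterate_succ_apply']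

theorem isAutotopy_ite (hsem : ZeroSemilinear f a) (hf : IsNQuasigroup f) (ha : a ≠ 0)
    (hinv : Involutive ξ) (hfix : ∀ x, ξ x ≠ x) (h0 : ξ 0 = a) (p : Fin (n + 1) → Prop)
    [DecidablePred p] (hp : Even #{k | p k}) : IsAutotopy f (fun k => if p k then ξ else 1) := by
  intro x
  have hargs : (fun k => (if p k.succ then ξ else 1) (x k))
      = fun k => if k ∈ ({k | p k.succ} : Finset (Fin n)) then ξ (x k) else x k := by
    ext k
    split_ifs <;> simp_all
  rw [hargs, apply_ite_mem hsem hf ha hinv hfix h0]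
  rw [Fin.card_filter_univ_succ' p] at hp
  by_cases hp0 : p 0
  · simp only [hp0, if_true, add_comm 1, Nat.even_add_one, Nat.not_even_iff_odd] at hp ⊢
    rw [hinv.iterate_odd hp]
  · simp only [hp0, if_false, zero_add] at hp ⊢
    rw [hinv.iterate_even hp]
    rfl

end ZeroSemilinear

/-- For a `{0,a}`-semilinear quasigroup `f` with native involution
`ξ = (0a)(bc)` (the fixed-point-free involution sending `0` to `a`),
placing `ξ` in two distinct positions `i, j ∈ {0,…,n}` and the identity elsewhere
gives an autotopy of `f`. -/
theorem native_involutions_autotopy {n : ℕ} (f : (Fin n → Fin 4) → Fin 4)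
    (hf : IsNQuasigroup f) (a : Fin 4) (ha : a ≠ 0) (hsem : ZeroSemilinear f a)
    (ξ : Equiv.Perm (Fin 4)) (hinv : ∀ x, ξ (ξ x) = x) (hfix : ∀ x, ξ x ≠ x)
    (h0 : ξ 0 = a) (i j : Fin (n + 1)) (hij : i ≠ j) :
    IsAutotopy f (fun k => if k = i ∨ k = j then ξ else 1) := by
  have hpair : ({k | k = i ∨ k = j} : Finset (Fin (n + 1))) = {i, j} := by ext; simp
  exact hsem.isAutotopy_ite hf ha hinv hfix h0 _ (by rw [hpair, card_pair hij]; exact even_two)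
end

section
/- Let f be an n-ary quasigroup on a finite set Σ decomposed as f(x₁,…,xₙ) = h(g(x₁,…,xₘ), x_{m+1},…,xₙ) for an m-ary quasigroup g and an (n−m+1)-ary quasigroup h, with 2 ≤ m < n. Then Atp(f) = Atp(g) ⊗̇ Atp(h), where Atp(g) ⊗̇ Atp(h) is the set of all isotopies (τ₀, π₁,…,πₘ, τ₂,…,τ_{n−m+1}) such that (π₀, π₁,…,πₘ) ∈ Atp(g) and (τ₀, τ₁, τ₂,…,τ_{n−m+1}) ∈ Atp(h) with π₀ = τ₁. -/
/-
Fix the trailing arguments at some `z₀`. Since `h` is invertible in its first argument, the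
autotopy equation of `f` at `(x, z₀)` says that `g ∘ θ` factors as `π₀ ∘ g`, where
`π₀ = h(·, θ z₀)⁻¹ ∘ θ₀ ∘ h(·, z₀)`. Because `g` is surjective, every first argument of `h` has
the form `g x`, so the autotopy equation of `f` is exactly that of `h` for
`(θ₀, π₀, θ_{m+1}, …, θₙ)`.
-/

open Function Equiv Fin

theorem exists_perm_semiconj_of_comp {X β α : Type*} {G : X → α} {H : α → β → α}
    {σ : X → X} {ρ : β → β} {φ : Perm α} (hG : Surjective G)
    (hH : ∀ z, Bijective fun a => H a z) (z₀ : β)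
    (hcomm : ∀ x z, H (G (σ x)) (ρ z) = φ (H (G x) z)) :
    ∃ ψ : Perm α, Semiconj G σ ψ ∧ ∀ u z, H (ψ u) (ρ z) = φ (H u z) := by
  let A : Perm α := .ofBijective _ (hH z₀)
  let B : Perm α := .ofBijective _ (hH (ρ z₀))
  have hψ : Semiconj G σ (A.trans φ |>.trans B.symm) := fun x =>
    B.eq_symm_apply.2 (hcomm x z₀)
  refine ⟨A.trans φ |>.trans B.symm, hψ, fun u z => ?_⟩
  obtain ⟨x, rfl⟩ := hG u
  rw [← hψ.eq, hcomm]

section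

variable {α : Type}

theorem IsNQuasigroup.surjective {n : ℕ} {f : (Fin n → α) → α} (hf : IsNQuasigroup f)
    (hn : 0 < n) : Surjective f := fun u =>
  ⟨_, ((hf ⟨0, hn⟩ fun _ => u).2 u).choose_spec⟩

theorem IsNQuasigroup.bijective_cons [Nonempty α] {k : ℕ} {h : (Fin (k + 1) → α) → α}
    (hh : IsNQuasigroup h) (z : Fin k → α) : Bijective fun a => h (cons a z) := by
  simpa only [update_cons_zero] using hh 0 (cons (Classical.arbitrary α) z)

theorem IsAutotopy.of_isEmpty [IsEmpty α] {n : ℕ} (hn : 0 < n) (f : (Fin n → α) → α)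
    (θ : Fin (n + 1) → Perm α) : IsAutotopy f θ := fun x =>
  isEmptyElim (x ⟨0, hn⟩)

theorem isAutotopy_iff_forall_cons {k : ℕ} {h : (Fin (k + 1) → α) → α}
    {τ : Fin (k + 1 + 1) → Perm α} :
    IsAutotopy h τ ↔
      ∀ u z, h (cons (τ 1 u) fun j => τ j.succ.succ (z j)) = τ 0 (h (cons u z)) := by
  refine forall_fin_succ_pi.trans <| forall₂_congr fun u z => ?_
  have hτ : (fun i => τ i.succ ((cons u z : Fin (k + 1) → α) i)) =
      cons (τ 1 u) fun j => τ j.succ.succ (z j) := by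
    funext i
    cases i using Fin.cases <;> rfl
  rw [hτ]

theorem isAutotopy_comp_iff {m k : ℕ} {g : (Fin m → α) → α} {h : (Fin (k + 1) → α) → α}
    {f : (Fin (m + k) → α) → α}
    (hf : ∀ x : Fin (m + k) → α,
      f x = h (cons (g fun i => x (castAdd k i)) fun j => x (natAdd m j)))
    (θ : Fin (m + k + 1) → Perm α) :
    IsAutotopy f θ ↔
      ∀ x z, h (cons (g fun i => θ (castAdd k i).succ (x i)) fun j => θ (natAdd m j).succ (z j)) =
        θ 0 (h (cons (g x) z)) := by
  refine forall_fin_add_pi.trans <| forall₂_congr fun x z => ?_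
  simp only [hf, addCases_left, addCases_right]

end

theorem autotopy_of_composition_general {α : Type} {m k : ℕ}
    (hm : 2 ≤ m)
    (g : (Fin m → α) → α) (h : (Fin (k + 1) → α) → α)
    (f : (Fin (m + k) → α) → α)
    (hg : IsNQuasigroup g) (hh : IsNQuasigroup h)
    (hf : ∀ x : Fin (m + k) → α,
      f x = h (Fin.cons (g (fun i => x (Fin.castAdd k i))) (fun j => x (Fin.natAdd m j)))) :
    ∀ θ : Fin (m + k + 1) → Equiv.Perm α,
      IsAutotopy f θ ↔
        ∃ (π : Fin (m + 1) → Equiv.Perm α) (τ : Fin (k + 1 + 1) → Equiv.Perm α),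
          IsAutotopy g π ∧ IsAutotopy h τ ∧ π 0 = τ 1 ∧
          θ 0 = τ 0 ∧
          (∀ i : Fin m, θ (Fin.castAdd k i).succ = π i.succ) ∧
          (∀ j : Fin k, θ (Fin.natAdd m j).succ = τ j.succ.succ) := by
  intro θ
  rw [isAutotopy_comp_iff hf]
  constructor
  · intro hθ
    rcases isEmpty_or_nonempty α with hα | hα
    · exact ⟨1, 1, .of_isEmpty (by omega) g _, .of_isEmpty k.succ_pos h _, rfl,
        Subsingleton.elim _ _, fun _ => Subsingleton.elim _ _, fun _ => Subsingleton.elim _ _⟩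
    obtain ⟨π₀, hgπ₀, hhπ₀⟩ := exists_perm_semiconj_of_comp (hg.surjective (by omega))
      hh.bijective_cons (fun _ => Classical.arbitrary α) hθ
    exact ⟨cons π₀ fun i => θ (castAdd k i).succ,
      cons (θ 0) (cons π₀ fun j => θ (natAdd m j).succ), hgπ₀,
      isAutotopy_iff_forall_cons.2 hhπ₀, rfl, rfl, fun _ => rfl, fun _ => rfl⟩
  · rintro ⟨π, τ, hπ, hτ, hπτ, hθ₀, hθg, hθh⟩ x z
    simp only [hθg, hθh, hθ₀, hπ x, hπτ]
    exact isAutotopy_iff_forall_cons.1 hτ _ _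

/-- Lemma on autotopies of a composition: if
`f(x₁,…,xₙ) = h(g(x₁,…,xₘ), x_{m+1},…,xₙ)` (here `n = m + k`), then
`Atp(f) = Atp(g) ⊗̇ Atp(h)`: the autotopies of `f` are exactly the tuples
`(τ₀, π₁,…,πₘ, τ₂,…,τ_{k+1})` where `(π₀,π₁,…,πₘ) ∈ Atp(g)`,
`(τ₀,τ₁,τ₂,…,τ_{k+1}) ∈ Atp(h)` and `π₀ = τ₁`. -/
theorem autotopy_of_composition {α : Type} [Fintype α] {m k : ℕ}
    (hm : 2 ≤ m) (hk : 1 ≤ k)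
    (g : (Fin m → α) → α) (h : (Fin (k + 1) → α) → α)
    (f : (Fin (m + k) → α) → α)
    (hg : IsNQuasigroup g) (hh : IsNQuasigroup h) (hfq : IsNQuasigroup f)
    (hf : ∀ x : Fin (m + k) → α,
      f x = h (Fin.cons (g (fun i => x (Fin.castAdd k i))) (fun j => x (Fin.natAdd m j)))) :
    ∀ θ : Fin (m + k + 1) → Equiv.Perm α,
      IsAutotopy f θ ↔
        ∃ (π : Fin (m + 1) → Equiv.Perm α) (τ : Fin (k + 1 + 1) → Equiv.Perm α),
          IsAutotopy g π ∧ IsAutotopy h τ ∧ π 0 = τ 1 ∧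
          θ 0 = τ 0 ∧
          (∀ i : Fin m, θ (Fin.castAdd k i).succ = π i.succ) ∧
          (∀ j : Fin k, θ (Fin.natAdd m j).succ = τ j.succ.succ) :=
  autotopy_of_composition_general hm g h f hg hh hf
end

section
/- Let f be an n-ary quasigroup on a finite set Σ with f(0,…,0) = 0 (where 0 ∈ Σ), and let (θ₀,…,θₙ) be an autotopy of f with θᵢ(0) = 0 for all i = 0,…,n. If θᵢ is the identity permutation for some i ∈ {0,…,n}, then θⱼ is the identity for all j ∈ {0,…,n}. -/
namespace IsAutotopy

variable {α : Type} {n : ℕ} {f : (Fin n → α) → α} {θ : Fin (n + 1) → Equiv.Perm α}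

theorem apply_update_of_fixed (hθ : IsAutotopy f θ) {x : Fin n → α}
    (hx : ∀ k, θ k.succ (x k) = x k) (k : Fin n) (a : α) :
    f (Function.update x k (θ k.succ a)) = θ 0 (f (Function.update x k a)) := by
  rw [← hθ]
  congr 1
  funext l
  rcases eq_or_ne l k with rfl | hl
  · simp
  · simp [Function.update_of_ne hl, hx]

theorem zero_eq_one_of_succ_eq_one (hθ : IsAutotopy f θ) {x : Fin n → α}
    (hx : ∀ k, θ k.succ (x k) = x k) {k : Fin n}
    (hsurj : Function.Surjective fun a => f (Function.update x k a)) (hk : θ k.succ = 1) :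
    θ 0 = 1 := by
  ext b
  obtain ⟨a, rfl⟩ := hsurj b
  simpa [hk] using (hθ.apply_update_of_fixed hx k a).symm

theorem succ_eq_one_of_zero_eq_one (hθ : IsAutotopy f θ) {x : Fin n → α}
    (hx : ∀ k, θ k.succ (x k) = x k) {k : Fin n}
    (hinj : Function.Injective fun a => f (Function.update x k a)) (h0 : θ 0 = 1) :
    θ k.succ = 1 := by
  ext a
  exact hinj (by simpa [h0] using hθ.apply_update_of_fixed hx k a)

end IsAutotopy

theorem autotopy_stab_zero_id_general {α : Type} {n : ℕ} (z : α)
    (f : (Fin n → α) → α) (hf : IsNQuasigroup f)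
    (θ : Fin (n + 1) → Equiv.Perm α) (hθ : IsAutotopy f θ)
    (hstab : ∀ i, θ i z = z) (i : Fin (n + 1)) (hi : θ i = 1) :
    ∀ j : Fin (n + 1), θ j = 1 := by
  have hfix : ∀ k : Fin n, θ k.succ z = z := fun k => hstab k.succ
  have h0 : θ 0 = 1 := by
    rcases Fin.eq_zero_or_eq_succ i with rfl | ⟨k, rfl⟩
    · exact hi
    · exact hθ.zero_eq_one_of_succ_eq_one hfix (hf k _).surjective hi
  intro j
  rcases Fin.eq_zero_or_eq_succ j with rfl | ⟨k, rfl⟩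
  · exact h0
  · exact hθ.succ_eq_one_of_zero_eq_one hfix (hf k _).injective h0

/-- If `f(0,…,0) = 0` and an autotopy of `f` stabilizes the all-zero tuple, then if one
of its permutations is the identity, all of them are. -/
theorem autotopy_stab_zero_id {α : Type} [Fintype α] {n : ℕ} (z : α)
    (f : (Fin n → α) → α) (hf : IsNQuasigroup f) (hz : f (fun _ => z) = z)
    (θ : Fin (n + 1) → Equiv.Perm α) (hθ : IsAutotopy f θ)
    (hstab : ∀ i, θ i z = z) (i : Fin (n + 1)) (hi : θ i = 1) :
    ∀ j : Fin (n + 1), θ j = 1 :=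
  autotopy_stab_zero_id_general z f hf θ hθ hstab i hi
end

section
/- Let f be an n-ary quasigroup on a finite set Σ with f(0,…,0) = 0, and let θ = (θ₀,…,θₙ) and θ' = (θ₀',…,θₙ') be two autotopies of f both stabilizing the all-zero tuple (i.e., θᵢ(0) = θᵢ'(0) = 0 for all i). If θ₀ = θ₀', then θ = θ'. More generally, if θᵢ = θᵢ' for some single index i ∈ {0,…,n}, then θ = θ'. -/
/-!
Restrict `f` to the `j`-th axis through the all-`z` tuple: `g_j a = f(z, …, z, a, z, …, z)`.
Since each `θ k` fixes `z`, the autotopy identity gives `g_j ∘ θ_{j+1} = θ_0 ∘ g_j`, and `g_j` is a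
bijection because `f` is a quasigroup. Hence `θ_{j+1} = g_j⁻¹ ∘ θ_0 ∘ g_j` is determined by `θ_0`,
and conversely `θ_0 = g_j ∘ θ_{j+1} ∘ g_j⁻¹` is determined by `θ_{j+1}`.
-/

namespace IsAutotopy

variable {α : Type} {n : ℕ} {f : (Fin n → α) → α} {θ θ' : Fin (n + 1) → Equiv.Perm α} {z : α}

theorem apply_update_const (hθ : IsAutotopy f θ) (hz : ∀ k : Fin n, θ k.succ z = z)
    (j : Fin n) (a : α) :
    f (Function.update (fun _ => z) j (θ j.succ a)) =
      θ 0 (f (Function.update (fun _ => z) j a)) := by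
  rw [← hθ]
  congr 1
  funext k
  rcases eq_or_ne k j with rfl | hk
  · simp
  · simp [Function.update_of_ne hk, hz]

theorem apply_zero_eq_of_apply_succ_eq (hf : IsNQuasigroup f)
    (hθ : IsAutotopy f θ) (hθ' : IsAutotopy f θ')
    (hz : ∀ k : Fin n, θ k.succ z = z) (hz' : ∀ k : Fin n, θ' k.succ z = z)
    {j : Fin n} (h : θ j.succ = θ' j.succ) : θ 0 = θ' 0 := by
  ext a
  obtain ⟨b, rfl⟩ := (hf j (fun _ => z)).2 a
  simp only [← hθ.apply_update_const hz, ← hθ'.apply_update_const hz', h]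

theorem eq_of_apply_zero_eq (hf : IsNQuasigroup f)
    (hθ : IsAutotopy f θ) (hθ' : IsAutotopy f θ')
    (hz : ∀ k : Fin n, θ k.succ z = z) (hz' : ∀ k : Fin n, θ' k.succ z = z)
    (h0 : θ 0 = θ' 0) : θ = θ' := by
  funext k
  refine Fin.cases h0 (fun j => ?_) k
  ext a
  refine (hf j (fun _ => z)).1 ?_
  simp only [hθ.apply_update_const hz, hθ'.apply_update_const hz', h0]

end IsAutotopy

theorem autotopy_stab_zero_unique_general {α : Type} {n : ℕ} (z : α)
    (f : (Fin n → α) → α) (hf : IsNQuasigroup f)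
    (θ θ' : Fin (n + 1) → Equiv.Perm α)
    (hθ : IsAutotopy f θ) (hθ' : IsAutotopy f θ')
    (hstab : ∀ i, θ i z = z) (hstab' : ∀ i, θ' i z = z)
    (i : Fin (n + 1)) (hi : θ i = θ' i) :
    θ = θ' := by
  have hz : ∀ k : Fin n, θ k.succ z = z := fun k => hstab k.succ
  have hz' : ∀ k : Fin n, θ' k.succ z = z := fun k => hstab' k.succ
  refine hθ.eq_of_apply_zero_eq hf hθ' hz hz' ?_
  induction i using Fin.cases with
  | zero => exact hi
  | succ j => exact hθ.apply_zero_eq_of_apply_succ_eq hf hθ' hz hz' hi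

/-- An autotopy stabilizing the all-zero tuple is uniquely determined by any single of
its permutations: if two such autotopies agree in one position, they are equal. -/
theorem autotopy_stab_zero_unique {α : Type} [Fintype α] {n : ℕ} (z : α)
    (f : (Fin n → α) → α) (hf : IsNQuasigroup f) (hz : f (fun _ => z) = z)
    (θ θ' : Fin (n + 1) → Equiv.Perm α)
    (hθ : IsAutotopy f θ) (hθ' : IsAutotopy f θ')
    (hstab : ∀ i, θ i z = z) (hstab' : ∀ i, θ' i z = z)
    (i : Fin (n + 1)) (hi : θ i = θ' i) :
    θ = θ' :=
  autotopy_stab_zero_unique_general z f hf θ θ' hθ hθ' hstab hstab' i hi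
end

section
/- Let f be an n-ary quasigroup on a finite set Σ, and let θ = (θ₀,…,θₙ) be an autotopy of f stabilizing some tuple (a₀,a₁,…,aₙ) with a₀ = f(a₁,…,aₙ), i.e., θᵢ(aᵢ) = aᵢ for all i. Then all the permutations θ₀, θ₁, …, θₙ have the same order as elements of the symmetric group on Σ. -/
/-! Powers of an autotopy are autotopies fixing the same tuple, so it suffices to show that
`θᵢ = 1 ↔ θ₀ = 1` for every autotopy `θ` fixing `a₁, …, aₙ`. Restricting `f` to the line
through `(a₁, …, aₙ)` in direction `k` gives a bijection `t ↦ f(a₁, …, t, …, aₙ)` which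
intertwines `θₖ` with `θ₀`; hence one is the identity exactly when the other is. -/

namespace IsAutotopy

variable {α : Type} {n : ℕ} {f : (Fin n → α) → α} {θ η : Fin (n + 1) → Equiv.Perm α}

theorem one : IsAutotopy f 1 := fun _ => rfl

theorem mul (hθ : IsAutotopy f θ) (hη : IsAutotopy f η) : IsAutotopy f (θ * η) := fun x => by
  simpa only [Pi.mul_apply, Equiv.Perm.mul_apply, hη x] using hθ fun i => η i.succ (x i)

theorem pow (hθ : IsAutotopy f θ) (r : ℕ) : IsAutotopy f (θ ^ r) := by
  induction r with
  | zero => exact one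
  | succ r ih => rw [pow_succ]; exact ih.mul hθ

theorem apply_update (hθ : IsAutotopy f θ) {b : Fin n → α} (hb : ∀ i, θ i.succ (b i) = b i)
    (k : Fin n) (t : α) :
    θ 0 (f (Function.update b k t)) = f (Function.update b k (θ k.succ t)) := by
  rw [← hθ]
  congr 1
  funext i
  rcases eq_or_ne i k with rfl | hik
  · simp
  · simp [Function.update_of_ne hik, hb]

theorem eq_one_iff_zero_eq_one (hf : IsNQuasigroup f) (hθ : IsAutotopy f θ) {b : Fin n → α}
    (hb : ∀ i, θ i.succ (b i) = b i) (i : Fin (n + 1)) :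
    θ i = 1 ↔ θ 0 = 1 := by
  induction i using Fin.cases with
  | zero => rfl
  | succ k =>
    have hline := hθ.apply_update hb k
    constructor
    · intro hk
      ext y
      obtain ⟨t, rfl⟩ := (hf k b).surjective y
      simpa [hk] using hline t
    · intro h0
      ext t
      have hsame : f (Function.update b k (θ k.succ t)) = f (Function.update b k t) := by
        simpa [h0] using (hline t).symm
      exact (hf k b).injective hsame

end IsAutotopy

theorem autotopy_same_order_general {α : Type} {n : ℕ}
    (f : (Fin n → α) → α) (hf : IsNQuasigroup f)
    (θ : Fin (n + 1) → Equiv.Perm α) (hθ : IsAutotopy f θ)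
    (a : Fin (n + 1) → α)
    (hstab : ∀ i, θ i (a i) = a i) :
    ∀ i j : Fin (n + 1), orderOf (θ i) = orderOf (θ j) := by
  intro i j
  refine orderOf_eq_orderOf_iff.mpr fun r => ?_
  have hfix : ∀ k : Fin n, (θ ^ r) k.succ (a k.succ) = a k.succ := fun k =>
    Equiv.Perm.pow_apply_eq_self_of_apply_eq_self (hstab k.succ) r
  have hone := (hθ.pow r).eq_one_iff_zero_eq_one hf hfix
  exact (hone i).trans (hone j).symm

/-- If an autotopy of an `n`-ary quasigroup stabilizes some tuple of the code of `f`
(i.e. `a₀ = f(a₁,…,aₙ)` and `θᵢ aᵢ = aᵢ` for all `i`), then all its permutations have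
the same order. -/
theorem autotopy_same_order {α : Type} [Fintype α] {n : ℕ}
    (f : (Fin n → α) → α) (hf : IsNQuasigroup f)
    (θ : Fin (n + 1) → Equiv.Perm α) (hθ : IsAutotopy f θ)
    (a : Fin (n + 1) → α) (ha : a 0 = f (fun i => a i.succ))
    (hstab : ∀ i, θ i (a i) = a i) :
    ∀ i j : Fin (n + 1), orderOf (θ i) = orderOf (θ j) :=
  autotopy_same_order_general f hf θ hθ a hstab
end
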